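/- arXiv:2206.00073 — 2 statements merged into one kernel-verified Lean document; each statement's English description precedes it below -/
import Mathlib

section
/- Let w ∈ S_n avoid 3412 and 4231, let s be a simple transposition with sw < w < ws, and suppose z satisfies z ≤ w, ℓ(z) = ℓ(w) − 1, and zs < z. Then z avoids 3412 and 4231. -/
open Equiv

/-- `rk w i j` = #{k ≤ i : w(k) ≤ j} (1-indexed), for `w ∈ S_n`. -/
def rk {n : ℕ} (w : Equiv.Perm (Fin n)) (i j : ℕ) : ℕ :=
  (Finset.univ.filter (fun k : Fin n => (k : ℕ) + 1 ≤ i ∧ (w k : ℕ) + 1 ≤ j)).card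

/-- Bruhat order on `S_n` via the rank-matrix criterion: `z ≤ w` iff
`r_{i,j}(z) ≥ r_{i,j}(w)` for all `i,j`. -/
def BruhatLE {n : ℕ} (z w : Equiv.Perm (Fin n)) : Prop :=
  ∀ i ≤ n, ∀ j ≤ n, rk w i j ≤ rk z i j

def BruhatLT {n : ℕ} (z w : Equiv.Perm (Fin n)) : Prop :=
  BruhatLE z w ∧ z ≠ w

/-- Coxeter length = number of inversions. -/
def len {n : ℕ} (w : Equiv.Perm (Fin n)) : ℕ :=
  (Finset.univ.filter (fun p : Fin n × Fin n => p.1 < p.2 ∧ w p.2 < w p.1)).card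

/-- One-line notation of `w`, 1-indexed, extended by the identity outside `[1,n]`
(so that `w(n+1) = n+1`). -/
def ol {n : ℕ} (w : Equiv.Perm (Fin n)) (k : ℕ) : ℕ :=
  if h : 1 ≤ k ∧ k ≤ n then ((w ⟨k - 1, by omega⟩ : Fin n) : ℕ) + 1 else k

/-- The coessential set of `w` (1-indexed pairs). -/
def Coess {n : ℕ} (w : Equiv.Perm (Fin n)) : Set (ℕ × ℕ) :=
  {p | 1 ≤ p.1 ∧ p.1 ≤ n ∧ 1 ≤ p.2 ∧ p.2 ≤ n ∧
    ol w p.1 ≤ p.2 ∧ p.2 < ol w (p.1 + 1) ∧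
    ol w⁻¹ p.2 ≤ p.1 ∧ p.1 < ol w⁻¹ (p.2 + 1)}

/-- `w` contains the pattern 312. -/
def Has312 {n : ℕ} (w : Equiv.Perm (Fin n)) : Prop :=
  ∃ a b c : Fin n, a < b ∧ b < c ∧ w b < w c ∧ w c < w a

/-- `w` contains the pattern 3412. -/
def Has3412 {n : ℕ} (w : Equiv.Perm (Fin n)) : Prop :=
  ∃ a b c d : Fin n, a < b ∧ b < c ∧ c < d ∧ w c < w d ∧ w d < w a ∧ w a < w b

/-- `w` contains the pattern 4231. -/
def Has4231 {n : ℕ} (w : Equiv.Perm (Fin n)) : Prop :=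
  ∃ a b c d : Fin n, a < b ∧ b < c ∧ c < d ∧ w d < w b ∧ w b < w c ∧ w c < w a

/-- `w` is smooth iff it avoids 3412 and 4231. -/
def SmoothPerm {n : ℕ} (w : Equiv.Perm (Fin n)) : Prop := ¬ Has3412 w ∧ ¬ Has4231 w

/-- `w` is codominant iff `i ≤ j` for every `(i,j)` in the coessential set. -/
def Codominant {n : ℕ} (w : Equiv.Perm (Fin n)) : Prop :=
  ∀ p ∈ Coess w, p.1 ≤ p.2

/-- Lexicographic comparison on one-line notations. -/
def LexLe {n : ℕ} (u w : Equiv.Perm (Fin n)) : Prop :=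
  u = w ∨ ∃ i : Fin n, (∀ j < i, u j = w j) ∧ u i < w i

/-- `m` is a Hessenberg function (0-indexed): non-decreasing and `m i ≥ i`. -/
def Hess {n : ℕ} (m : Fin n → Fin n) : Prop :=
  Monotone m ∧ ∀ i, i ≤ m i

/-- `w` is the lexicographically greatest permutation with `w i ≤ m i` for all `i`. -/
def IsLexMax {n : ℕ} (m : Fin n → Fin n) (w : Equiv.Perm (Fin n)) : Prop :=
  (∀ i, w i ≤ m i) ∧ ∀ u : Equiv.Perm (Fin n), (∀ i, u i ≤ m i) → LexLe u w

instance {n : ℕ} (z w : Equiv.Perm (Fin n)) : Decidable (BruhatLE z w) := by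
  unfold BruhatLE; exact Nat.decidableBallLE _ _

/-!
Below `w` in the rank-matrix order one can always step down by a transposition `w ↦ w · (i j)`
that lowers the length, so `z ≤ w` with `ℓ(z) = ℓ(w) - 1` forces `z = w · (p q)` for an inversion
`p < q` of `w` whose rectangle `(p, q) × (w q, w p)` contains no point of the graph of `w`. The
ascent of `w` and the descent of `z` at `s = (l l+1)` then force `q = l` or `p = l + 1` (`z = ws`
is excluded by length, as `w < ws`), so that the neighbouring position `g = l + 1` (resp. `g = l`)
carries a value strictly between `w q` and `w p`. With such a `g` next to the transposition,
every occurrence of `3412` or `4231` in `w · (p q)` can be moved to an occurrence of one of them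
in `w`. The second case is the mirror image of the first under conjugation by the longest element,
which preserves both patterns.
-/

section

variable {n : ℕ}

lemma rk_mul_swap (w : Perm (Fin n)) {i j : Fin n} (hij : i < j) (hw : w j < w i) (a b : ℕ) :
    rk (w * swap i j) a b =
      rk w a b + if (i : ℕ) < a ∧ a ≤ j ∧ (w j : ℕ) < b ∧ b ≤ w i then 1 else 0 := by
  set F : Perm (Fin n) → Fin n → ℕ :=
    fun u k => if (k : ℕ) + 1 ≤ a ∧ (u k : ℕ) + 1 ≤ b then 1 else 0
  have hrk : ∀ u, rk u a b = ∑ k, F u k := fun u => Finset.card_filter _ _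
  -- only the summands at `i` and `j` differ; exchanging them makes the sums agree termwise
  have key : ∀ k, F (w * swap i j) k + (if k = i then F w i else 0) + (if k = j then F w j else 0)
      = F w k + (if k = i then F (w * swap i j) i else 0)
        + (if k = j then F (w * swap i j) j else 0) := by
    intro k
    simp only [F, Perm.mul_apply, swap_apply_def]
    grind
  have := Finset.sum_congr rfl (fun k (_ : k ∈ Finset.univ) => key k)
  simp only [Finset.sum_add_distrib, Finset.sum_ite_eq', Finset.mem_univ, if_true] at this
  simp only [hrk, F, Perm.mul_apply, swap_apply_left, swap_apply_right] at this ⊢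
  split_ifs at this ⊢ <;> omega

lemma rk_eq_rk_add_card (w : Perm (Fin n)) (a : ℕ) {c b : ℕ} (hcb : c ≤ b) :
    rk w a b = rk w a c +
      (Finset.univ.filter fun k : Fin n => (k : ℕ) + 1 ≤ a ∧ c ≤ w k ∧ (w k : ℕ) + 1 ≤ b).card := by
  simp only [rk, Finset.card_filter, ← Finset.sum_add_distrib]
  refine Finset.sum_congr rfl fun k _ => ?_
  split_ifs <;> omega

def inversions (w : Perm (Fin n)) : Finset (Fin n × Fin n) :=
  Finset.univ.filter fun x => x.1 < x.2 ∧ w x.2 < w x.1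

/-- Inversions of `w * swap i j` inject into those of `w` other than `(i, j)`: pairs `(i, k)` and
`(k, j)` with `i < k < j` stay, the others are moved by `swap i j` and re-sorted. -/
def swapInversion (i j : Fin n) (x : Fin n × Fin n) : Fin n × Fin n :=
  if (x.1 = i ∧ i < x.2 ∧ x.2 < j) ∨ (x.2 = j ∧ i < x.1 ∧ x.1 < j) then x
  else if swap i j x.1 < swap i j x.2 then (swap i j x.1, swap i j x.2)
  else (swap i j x.2, swap i j x.1)

lemma swapInversion_swapInversion {i j : Fin n} (hij : i < j) {x : Fin n × Fin n}
    (hx : x.1 < x.2) : swapInversion i j (swapInversion i j x) = x := by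
  obtain ⟨a, b⟩ := x
  simp only [swapInversion, swap_apply_def] at *
  grind

lemma swapInversion_mem_inversions {w : Perm (Fin n)} {i j : Fin n} (hij : i < j)
    (hw : w j < w i) {x : Fin n × Fin n} (hx : x ∈ inversions (w * swap i j)) :
    swapInversion i j x ∈ (inversions w).erase (i, j) := by
  simp only [inversions, Finset.mem_erase, Finset.mem_filter, Finset.mem_univ, true_and] at hx ⊢
  obtain ⟨a, b⟩ := x
  simp only [swapInversion, Perm.mul_apply, swap_apply_def] at hx ⊢
  grind

lemma len_mul_swap_lt (w : Perm (Fin n)) {i j : Fin n} (hij : i < j) (hw : w j < w i) :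
    len (w * swap i j) < len w := by
  have hinj : Set.InjOn (swapInversion i j) (inversions (w * swap i j)) := by
    intro x hx y hy hxy
    rw [← swapInversion_swapInversion hij (Finset.mem_filter.1 hx).2.1,
      ← swapInversion_swapInversion hij (Finset.mem_filter.1 hy).2.1, hxy]
  calc len (w * swap i j) ≤ ((inversions w).erase (i, j)).card :=
        Finset.card_le_card_of_injOn _ (fun x hx => swapInversion_mem_inversions hij hw hx) hinj
    _ < len w := Finset.card_erase_lt_of_mem (by simp [inversions, hij, hw])

theorem BruhatLE.apply_le_of_eqOn {z w : Perm (Fin n)} (hle : BruhatLE z w) {i : Fin n}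
    (hpre : ∀ k < i, z k = w k) : z i ≤ w i := by
  by_contra! hgt
  have hlt : rk z (i + 1) (w i + 1) < rk w (i + 1) (w i + 1) := by
    refine Finset.card_lt_card ((Finset.ssubset_iff_of_subset fun k => ?_).2 ⟨i, by simp, ?_⟩)
    · simp only [Finset.mem_filter, Finset.mem_univ, true_and]
      grind
    · simp only [Finset.mem_filter, Finset.mem_univ, true_and]
      omega
  exact (hle _ i.isLt _ (w i).isLt).not_gt hlt

/-- The rank added by `swap i j` is paid for by `z i` itself, counted in `z` but not in `w`. -/
theorem BruhatLE.le_mul_swap {z w : Perm (Fin n)} (hle : BruhatLE z w) {i j : Fin n}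
    (hpre : ∀ k < i, z k = w k) (hij : i < j) (hzj : z i ≤ w j) (hji : w j < w i)
    (hjmin : ∀ k, i < k → k < j → ¬ (z i ≤ w k ∧ w k < w i)) :
    BruhatLE z (w * swap i j) := by
  intro a ha b hb
  rw [rk_mul_swap w hij hji]
  split_ifs
  · have hzb : (z i : ℕ) ≤ b := by omega
    have hlt : (Finset.univ.filter fun k : Fin n =>
          (k : ℕ) + 1 ≤ a ∧ (z i : ℕ) ≤ w k ∧ (w k : ℕ) + 1 ≤ b).card <
        (Finset.univ.filter fun k : Fin n =>
          (k : ℕ) + 1 ≤ a ∧ (z i : ℕ) ≤ z k ∧ (z k : ℕ) + 1 ≤ b).card := by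
      refine Finset.card_lt_card ((Finset.ssubset_iff_of_subset fun k => ?_).2 ⟨i, ?_, ?_⟩)
      · simp only [Finset.mem_filter, Finset.mem_univ, true_and]
        grind
      · simp only [Finset.mem_filter, Finset.mem_univ, true_and]
        omega
      · simp only [Finset.mem_filter, Finset.mem_univ, true_and]
        omega
    have := hle a ha (z i) (z i).isLt.le
    rw [rk_eq_rk_add_card w a hzb, rk_eq_rk_add_card z a hzb]
    omega
  · simpa using hle a ha b hb

theorem BruhatLE.exists_mul_swap {z w : Perm (Fin n)} (hle : BruhatLE z w) (hne : z ≠ w) :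
    ∃ i j : Fin n, i < j ∧ w j < w i ∧ BruhatLE z (w * swap i j) := by
  obtain ⟨i, hzi, hmin⟩ := wellFounded_lt.has_min {k | z k ≠ w k}
    (not_forall.1 fun h => hne (Equiv.ext h))
  have hpre : ∀ k < i, z k = w k := fun k hk => by_contra fun h => hmin k h hk
  have hlt : z i < w i := lt_of_le_of_ne (hle.apply_le_of_eqOn hpre) hzi
  have hpos : i < w.symm (z i) := by
    refine lt_of_not_ge fun h => ?_
    rcases h.lt_or_eq with h | h
    · exact h.ne (z.injective (by rw [hpre _ h, apply_symm_apply]))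
    · exact hzi ((w.apply_symm_apply (z i)).symm.trans (congrArg w h))
  obtain ⟨j, ⟨hij, hzj, hji⟩, hjmin⟩ := wellFounded_lt.has_min
    {k | i < k ∧ z i ≤ w k ∧ w k < w i} ⟨w.symm (z i), hpos, by simp, by simpa using hlt⟩
  exact ⟨i, j, hij, hji, hle.le_mul_swap hpre hij hzj hji
    fun k hik hkj hk => hjmin k ⟨hik, hk⟩ hkj⟩

theorem BruhatLE.len_lt {z w : Perm (Fin n)} (hle : BruhatLE z w) (hne : z ≠ w) :
    len z < len w := by
  induction hN : len w using Nat.strong_induction_on generalizing w with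
  | _ N ih =>
    obtain ⟨i, j, hij, hji, hle'⟩ := hle.exists_mul_swap hne
    have hlen := len_mul_swap_lt w hij hji
    rcases eq_or_ne z (w * swap i j) with rfl | hne'
    · omega
    · have := ih _ (hN ▸ hlen) hle' hne' rfl
      omega

theorem BruhatLE.exists_eq_mul_swap {z w : Perm (Fin n)} (hle : BruhatLE z w)
    (hlen : len z + 1 = len w) :
    ∃ p q : Fin n, p < q ∧ w q < w p ∧ z = w * swap p q ∧
      ∀ k, p < k → k < q → ¬ (w q < w k ∧ w k < w p) := by
  have hne : z ≠ w := by rintro rfl; omega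
  obtain ⟨p, q, hpq, hqp, hle'⟩ := hle.exists_mul_swap hne
  have hz : z = w * swap p q := by
    by_contra h
    have := hle'.len_lt h
    have := len_mul_swap_lt w hpq hqp
    omega
  refine ⟨p, q, hpq, hqp, hz, fun k hpk hkq ⟨hqk, hkp⟩ => ?_⟩
  have hle'' : BruhatLE z (w * swap p k) := fun a _ b _ => by
    rw [hz, rk_mul_swap w hpq hqp, rk_mul_swap w hpk hkp]
    split_ifs <;> omega
  have hne' : z ≠ w * swap p k := fun h =>
    hkq.ne' (by simpa [hz] using congrArg (fun u : Perm (Fin n) => u p) h)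
  have := hle''.len_lt hne'
  have := len_mul_swap_lt w hpk hkp
  omega

theorem BruhatLE.lt_of_le_mul_swap {u : Perm (Fin n)} {i j : Fin n} (hij : i < j)
    (h : BruhatLE u (u * swap i j)) : u i < u j := by
  refine lt_of_le_of_ne (not_lt.1 fun hji => ?_) (u.injective.ne hij.ne)
  have := h (i + 1) (by omega) (u j + 1) (by omega)
  rw [rk_mul_swap u hij hji, if_pos (by omega)] at this
  omega

theorem BruhatLE.lt_of_mul_swap_le {u : Perm (Fin n)} {i j : Fin n} (hij : i < j)
    (h : BruhatLE (u * swap i j) u) : u j < u i := by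
  simpa using BruhatLE.lt_of_le_mul_swap (u := u * swap i j) hij (by rwa [mul_swap_mul_self])

section Smooth

variable {w : Perm (Fin n)} {p q g : Fin n}

/- Case analysis on which positions of the occurrence are `p` or `q`. It is transported to `w`
either by moving `p` to `q` (or `q` to `p`), which the cover condition allows, or by keeping the
positions and the old values; an occurrence through both `p` and `q` is rerouted through `g`.
In two cases an occurrence of `4231` yields one of `3412`. -/
theorem SmoothPerm.not_has3412_mul_swap (hw : SmoothPerm w) (hpq : p < q) (hg : (g : ℕ) = q + 1)
    (hqg : w q < w g) (hgp : w g < w p) (hcov : ∀ k, p < k → k < q → ¬ (w q < w k ∧ w k < w p)) :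
    ¬ Has3412 (w * swap p q) := by
  rintro ⟨a, b, c, d, hab, hbc, hcd, u1, u2, u3⟩
  simp only [Perm.mul_apply, swap_apply_def] at u1 u2 u3
  have hinj := w.injective
  rcases eq_or_ne a p with rfl | hap
  · rcases eq_or_ne b q with rfl | hbq
    · exact hw.2 ⟨a, b, g, c, by grind⟩
    rcases lt_or_gt_of_ne (hinj.ne hab.ne') with hb | hb
    · exact hw.1 ⟨q, b, c, d, by grind⟩
    · exact hw.1 ⟨a, b, c, d, by grind⟩
  rcases eq_or_ne b p with rfl | hbp
  · exact hw.1 ⟨a, b, c, d, by grind⟩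
  rcases eq_or_ne c p with rfl | hcp
  · rcases eq_or_ne d q with rfl | hdq
    · exact hw.1 ⟨a, b, d, g, by grind⟩
    rcases lt_or_gt_of_ne (hinj.ne hcd.ne') with hd | hd
    · exact hw.1 ⟨a, b, q, d, by grind⟩
    · exact hw.1 ⟨a, b, c, d, by grind⟩
  rcases eq_or_ne d p with rfl | hdp
  · exact hw.1 ⟨a, b, c, q, by grind⟩
  rcases eq_or_ne a q with rfl | haq
  · exact hw.1 ⟨p, b, c, d, by grind⟩
  rcases eq_or_ne b q with rfl | hbq
  · rcases lt_or_gt_of_ne hap with ha | ha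
    · exact hw.1 ⟨a, p, c, d, by grind⟩
    · exact hw.1 ⟨a, b, c, d, by grind⟩
  rcases eq_or_ne c q with rfl | hcq
  · exact hw.1 ⟨a, b, c, d, by grind⟩
  rcases eq_or_ne d q with rfl | hdq
  · rcases lt_or_gt_of_ne (hinj.ne hcd.ne) with hc | hc
    · exact hw.1 ⟨a, b, c, d, by grind⟩
    · exact hw.1 ⟨a, b, c, p, by grind⟩
  exact hw.1 ⟨a, b, c, d, by grind⟩

theorem SmoothPerm.not_has4231_mul_swap (hw : SmoothPerm w) (hpq : p < q) (hg : (g : ℕ) = q + 1)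
    (hqg : w q < w g) (hgp : w g < w p) (hcov : ∀ k, p < k → k < q → ¬ (w q < w k ∧ w k < w p)) :
    ¬ Has4231 (w * swap p q) := by
  rintro ⟨a, b, c, d, hab, hbc, hcd, u1, u2, u3⟩
  simp only [Perm.mul_apply, swap_apply_def] at u1 u2 u3
  have hinj := w.injective
  rcases eq_or_ne a p with rfl | hap
  · exact hw.2 ⟨a, b, c, d, by grind⟩
  rcases eq_or_ne b p with rfl | hbp
  · rcases eq_or_ne c q with rfl | hcq
    · exact hw.2 ⟨a, c, g, d, by grind⟩
    rcases lt_or_gt_of_ne (hinj.ne hbc.ne') with hc | hc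
    · exact hw.2 ⟨a, q, c, d, by grind⟩
    · exact hw.2 ⟨a, b, c, d, by grind⟩
  rcases eq_or_ne c p with rfl | hcp
  · rcases lt_or_gt_of_ne (show d ≠ q by grind) with hd | hd
    · rcases lt_or_gt_of_ne (hinj.ne (hab.trans hbc).ne) with ha | ha
      · exact hw.1 ⟨a, c, d, q, by grind⟩
      · exact hw.2 ⟨a, b, c, d, by grind⟩
    · exact hw.2 ⟨a, b, q, d, by grind⟩
  rcases eq_or_ne d p with rfl | hdp
  · exact hw.2 ⟨a, b, c, q, by grind⟩
  rcases eq_or_ne a q with rfl | haq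
  · exact hw.2 ⟨p, b, c, d, by grind⟩
  rcases eq_or_ne b q with rfl | hbq
  · rcases lt_or_gt_of_ne hap with ha | ha
    · exact hw.2 ⟨a, p, c, d, by grind⟩
    rcases lt_or_gt_of_ne (hinj.ne (hbc.trans hcd).ne') with hd | hd
    · exact hw.2 ⟨a, b, c, d, by grind⟩
    · exact hw.1 ⟨p, a, b, d, by grind⟩
  rcases eq_or_ne c q with rfl | hcq
  · rcases lt_or_gt_of_ne (hinj.ne hbc.ne) with hb | hb
    · exact hw.2 ⟨a, b, c, d, by grind⟩
    · exact hw.2 ⟨a, b, p, d, by grind⟩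
  rcases eq_or_ne d q with rfl | hdq
  · exact hw.2 ⟨a, b, c, d, by grind⟩
  exact hw.2 ⟨a, b, c, d, by grind⟩

theorem SmoothPerm.mul_swap_of_succ (hw : SmoothPerm w) (hpq : p < q) (hg : (g : ℕ) = q + 1)
    (hqg : w q < w g) (hgp : w g < w p) (hcov : ∀ k, p < k → k < q → ¬ (w q < w k ∧ w k < w p)) :
    SmoothPerm (w * swap p q) :=
  ⟨hw.not_has3412_mul_swap hpq hg hqg hgp hcov, hw.not_has4231_mul_swap hpq hg hqg hgp hcov⟩

lemma revPerm_conj_apply (u : Perm (Fin n)) (x : Fin n) :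
    (Fin.revPerm * u * Fin.revPerm : Perm (Fin n)) x = Fin.rev (u (Fin.rev x)) := rfl

theorem SmoothPerm.revPerm_conj (hw : SmoothPerm w) :
    SmoothPerm (Fin.revPerm * w * Fin.revPerm) := by
  constructor
  · rintro ⟨a, b, c, d, hab, hbc, hcd, u1, u2, u3⟩
    simp only [revPerm_conj_apply, Fin.rev_lt_rev] at u1 u2 u3
    exact hw.1 ⟨d.rev, c.rev, b.rev, a.rev, by simpa, by simpa, by simpa, u3, u2, u1⟩
  · rintro ⟨a, b, c, d, hab, hbc, hcd, u1, u2, u3⟩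
    simp only [revPerm_conj_apply, Fin.rev_lt_rev] at u1 u2 u3
    exact hw.2 ⟨d.rev, c.rev, b.rev, a.rev, by simpa, by simpa, by simpa, u3, u2, u1⟩

theorem SmoothPerm.mul_swap_of_pred (hw : SmoothPerm w) (hpq : p < q) (hg : (p : ℕ) = g + 1)
    (hqg : w q < w g) (hgp : w g < w p) (hcov : ∀ k, p < k → k < q → ¬ (w q < w k ∧ w k < w p)) :
    SmoothPerm (w * swap p q) := by
  have key := hw.revPerm_conj.mul_swap_of_succ (p := q.rev) (q := p.rev) (g := g.rev)
    (Fin.rev_lt_rev.2 hpq) (by simp only [Fin.val_rev]; omega)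
    (by simpa [revPerm_conj_apply] using hgp) (by simpa [revPerm_conj_apply] using hqg)
    fun k hk hk' => by
      simpa [revPerm_conj_apply, and_comm] using
        hcov k.rev (Fin.lt_rev_iff.1 hk') (Fin.rev_lt_iff.1 hk)
  convert key.revPerm_conj using 1
  ext x
  simp only [Perm.mul_apply, swap_apply_def]
  split_ifs <;> simp_all [Fin.rev_eq_iff]

end Smooth

end

theorem stmt7_general {n : ℕ} (w : Equiv.Perm (Fin n)) (hw : SmoothPerm w)
    (l : Fin n) (hl : (l : ℕ) + 1 < n)
    (s : Equiv.Perm (Fin n)) (hs : s = Equiv.swap l ⟨(l : ℕ) + 1, hl⟩)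
    (h2 : BruhatLT w (w * s))
    (z : Equiv.Perm (Fin n))
    (hz1 : BruhatLE z w) (hz2 : len z + 1 = len w) (hz3 : BruhatLT (z * s) z) :
    SmoothPerm z := by
  subst hs
  set m : Fin n := ⟨l + 1, hl⟩
  have hm : (m : ℕ) = l + 1 := rfl
  have hlm : l < m := Fin.lt_def.2 (by omega)
  have hw_asc : w l < w m := h2.1.lt_of_le_mul_swap hlm
  have hz_desc : z m < z l := hz3.1.lt_of_mul_swap_le hlm
  obtain ⟨p, q, hpq, hqp, rfl, hcov⟩ := hz1.exists_eq_mul_swap hz2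
  simp only [Perm.mul_apply, swap_apply_def] at hz_desc
  rcases (by grind : q = l ∨ p = m ∨ (p = l ∧ q = m)) with rfl | rfl | ⟨rfl, rfl⟩
  · exact hw.mul_swap_of_succ hpq hm hw_asc (by grind) hcov
  · exact hw.mul_swap_of_pred hpq hm (by grind) hw_asc hcov
  · have := h2.1.len_lt h2.2
    omega

/-- For smooth `w` with `sw < w < ws`, any `z` covered by `w` with `zs < z`
is itself smooth. -/
theorem stmt7 {n : ℕ} (w : Equiv.Perm (Fin n)) (hw : SmoothPerm w)
    (l : Fin n) (hl : (l : ℕ) + 1 < n)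
    (s : Equiv.Perm (Fin n)) (hs : s = Equiv.swap l ⟨(l : ℕ) + 1, hl⟩)
    (h1 : BruhatLT (s * w) w) (h2 : BruhatLT w (w * s))
    (z : Equiv.Perm (Fin n))
    (hz1 : BruhatLE z w) (hz2 : len z + 1 = len w) (hz3 : BruhatLT (z * s) z) :
    SmoothPerm z :=
  stmt7_general w hw l hl s hs h2 z hz1 hz2 hz3
end

section
/- Let m0, m1, m2 be Hessenberg functions on [n] and i ∈ [n] with m0(j)=m1(j)=m2(j) for all j ≠ i, m0(i)=m1(i)−1=m2(i)−2, and m1(m1(i)+1)=m1(m1(i)). Set l = m1(i) and s = (l,l+1). Then w_{m1}s < w_{m1} < s w_{m1} = w_{m2} in Bruhat order, w_{m0} ≤ w_{m1} with ℓ(w_{m0}) = ℓ(w_{m1}) − 1, and s w_{m0} < w_{m0}. -/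
open Equiv

/-!
The lexicographically greatest permutation below a Hessenberg function `m` is the greedy one:
`w j` is the largest value `≤ m j` not used at an earlier position, and it is determined by this
property. Put `l = m₁ i`. Before `i` the function `m₁` stays below `l` and after `i` above it, so
`w₁ i = l`. Raising `m₁ i` to `l + 1` only exchanges the values `l` and `l + 1`, hence `w₂ = s w₁`.
Lowering it to `l - 1` brings the value `w₀ i` from a later position `q` to `i`, hence
`w₀ = w₁ (i q)`, and every value of `w₁` strictly between the positions `i` and `q` exceeds `l`;
so `(i q)` undoes a cover of `w₁`. Finally `m₁ (l + 1) = m₁ l` forces a descent of `w₁` at `l`.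
All Bruhat comparisons come from multiplying by a transposition at an inversion, which goes down
in the rank-matrix order.
-/

section PairSums

variable {α M : Type*} [Fintype α] [DecidableEq α] [AddCommMonoid M] {p q : α}

theorem sum_eq_add_add_sum_compl_pair (hpq : p ≠ q) (f : α → M) :
    ∑ x, f x = f p + f q + ∑ x ∈ {p, q}ᶜ, f x := by
  rw [← Finset.sum_add_sum_compl {p, q} f, Finset.sum_pair hpq]

theorem sum_le_sum_of_pair [PartialOrder M] [IsOrderedAddMonoid M] {f g : α → M} (hpq : p ≠ q)
    (hpair : f p + f q ≤ g p + g q) (hrest : ∀ x, x ≠ p → x ≠ q → f x = g x) :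
    ∑ x, f x ≤ ∑ x, g x := by
  rw [sum_eq_add_add_sum_compl_pair hpq f, sum_eq_add_add_sum_compl_pair hpq g]
  refine add_le_add hpair (Finset.sum_le_sum fun x hx => (hrest x ?_ ?_).le) <;>
    simp_all [Finset.mem_compl]

theorem sum_sum_eq_pair_decomp (hpq : p ≠ q) (H : α → α → M) :
    ∑ x, ∑ y, H x y = (H p p + H p q + H q p + H q q)
      + ∑ y ∈ {p, q}ᶜ, (H p y + H q y + H y p + H y q)
      + ∑ x ∈ {p, q}ᶜ, ∑ y ∈ {p, q}ᶜ, H x y := by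
  rw [sum_eq_add_add_sum_compl_pair hpq fun x => ∑ y, H x y]
  simp only [sum_eq_add_add_sum_compl_pair hpq (H _), Finset.sum_add_distrib]
  abel

end PairSums

section BruhatLength

variable {n : ℕ}

theorem rk_eq_sum (w : Perm (Fin n)) (i j : ℕ) :
    rk w i j = ∑ k : Fin n, if (k : ℕ) + 1 ≤ i ∧ (w k : ℕ) + 1 ≤ j then 1 else 0 :=
  Finset.card_filter _ _

theorem rk_mul (w σ : Perm (Fin n)) (i j : ℕ) :
    rk (w * σ) i j = ∑ k, if (σ⁻¹ k : ℕ) + 1 ≤ i ∧ (w k : ℕ) + 1 ≤ j then 1 else 0 := by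
  rw [rk_eq_sum, ← Equiv.sum_comp σ⁻¹]
  simp

theorem bruhatLE_mul_swap {w : Perm (Fin n)} {p q : Fin n} (hpq : p < q) (hw : w q < w p) :
    BruhatLE (w * swap p q) w := by
  intro i _ j _
  rw [rk_eq_sum, rk_mul, swap_inv]
  refine sum_le_sum_of_pair hpq.ne ?_ fun x hp hq => by rw [swap_apply_of_ne_of_ne hp hq]
  rw [swap_apply_left, swap_apply_right]
  split_ifs <;> omega

theorem bruhatLT_mul_swap {w : Perm (Fin n)} {p q : Fin n} (hpq : p < q) (hw : w q < w p) :
    BruhatLT (w * swap p q) w :=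
  ⟨bruhatLE_mul_swap hpq hw, fun h => hpq.ne (swap_eq_one_iff.mp (mul_eq_left.mp h))⟩

theorem bruhatLT_swap_mul {w : Perm (Fin n)} {p q a b : Fin n} (hpq : p < q) (hab : a < b)
    (hp : w p = b) (hq : w q = a) : BruhatLT (swap a b * w) w := by
  rw [swap_mul_eq_mul_swap, swap_comm, show w⁻¹ b = p by simp [← hp], show w⁻¹ a = q by simp [← hq]]
  exact bruhatLT_mul_swap hpq (hq ▸ hp ▸ hab)

theorem bruhatLT_self_swap_mul {w : Perm (Fin n)} {p q a b : Fin n} (hpq : p < q) (hab : a < b)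
    (hp : w p = a) (hq : w q = b) : BruhatLT w (swap a b * w) := by
  have := bruhatLT_swap_mul (w := swap a b * w) hpq hab (by simp [hp]) (by simp [hq])
  rwa [← mul_assoc, swap_mul_self, one_mul] at this

theorem len_eq_sum (w : Perm (Fin n)) :
    len w = ∑ x, ∑ y, if x < y ∧ w y < w x then 1 else 0 := by
  rw [len, Finset.card_filter, Fintype.sum_prod_type]

theorem len_mul (w σ : Perm (Fin n)) :
    len (w * σ) = ∑ x, ∑ y, if σ⁻¹ x < σ⁻¹ y ∧ w y < w x then 1 else 0 := by
  rw [len, Finset.card_filter, ← Fintype.sum_prod_type', ← Equiv.sum_comp (σ⁻¹.prodCongr σ⁻¹)]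
  simp

theorem len_mul_swap_add_one {w : Perm (Fin n)} {p q : Fin n} (hpq : p < q) (hw : w q < w p)
    (hbtw : ∀ k, p < k → k < q → w k < w q ∨ w p < w k) :
    len (w * swap p q) + 1 = len w := by
  have hfix : ∀ x ∈ ({p, q}ᶜ : Finset (Fin n)), swap p q x = x := fun x hx => by
    simp only [Finset.mem_compl, Finset.mem_insert, Finset.mem_singleton, not_or] at hx
    exact swap_apply_of_ne_of_ne hx.1 hx.2
  rw [len_mul, len_eq_sum, swap_inv, sum_sum_eq_pair_decomp hpq.ne,
    sum_sum_eq_pair_decomp hpq.ne, add_right_comm _ _ 1, add_right_comm _ _ 1]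
  -- corner: `(p, q)` is an inversion of `w` only; the rows and columns through `p` and `q` balance
  -- out because no value of `w` between the positions `p` and `q` lies between `w q` and `w p`
  congr 1; congr 1
  · simp only [swap_apply_left, swap_apply_right]
    split_ifs <;> omega
  · refine Finset.sum_congr rfl fun y hy => ?_
    simp only [swap_apply_left, swap_apply_right, hfix y hy]
    simp only [Finset.mem_compl, Finset.mem_insert, Finset.mem_singleton, not_or] at hy
    have hwy : w y ≠ w p ∧ w y ≠ w q := ⟨w.injective.ne hy.1, w.injective.ne hy.2⟩
    by_cases hmid : p < y ∧ y < q
    · have := hbtw y hmid.1 hmid.2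
      split_ifs <;> omega
    · split_ifs <;> omega
  · exact Finset.sum_congr rfl fun x hx => Finset.sum_congr rfl fun y hy => by
      rw [hfix x hx, hfix y hy]

end BruhatLength

section Greedy

variable {n : ℕ}

/-- `w j` is the largest value `≤ m j` not already taken by `w` at an earlier position. -/
def IsGreedy (m : Fin n → Fin n) (w : Perm (Fin n)) : Prop :=
  (∀ j, w j ≤ m j) ∧ ∀ j k, j < k → w k ≤ m j → w k < w j

def IsRaiseAt (m m' : Fin n → Fin n) (i : Fin n) : Prop :=
  (∀ j ≠ i, m' j = m j) ∧ (m' i : ℕ) = m i + 1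

variable {m m' : Fin n → Fin n} {u w : Perm (Fin n)} {i : Fin n}

theorem IsLexMax.isGreedy (hm : Monotone m) (hw : IsLexMax m w) : IsGreedy m w := by
  refine ⟨hw.1, fun j k hjk hkj => ?_⟩
  by_contra! hle
  have hlt : w j < w k := lt_of_le_of_ne hle (w.injective.ne hjk.ne)
  have hu : ∀ x, (w * swap j k) x ≤ m x := by
    intro x
    rcases eq_or_ne x j with rfl | hxj
    · simpa using hkj
    rcases eq_or_ne x k with rfl | hxk
    · simpa using (hw.1 j).trans (hm hjk.le)
    · simpa [swap_apply_of_ne_of_ne hxj hxk] using hw.1 x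
  rcases hw.2 _ hu with h | ⟨p, hagree, hp⟩
  · exact hlt.ne (by simpa using congr($h j).symm)
  rcases eq_or_ne p j with rfl | hpj
  · exact (hlt.trans (by simpa using hp)).false
  rcases eq_or_ne p k with rfl | hpk
  · exact hlt.ne (by simpa using (hagree j hjk).symm)
  · simp [swap_apply_of_ne_of_ne hpj hpk] at hp

theorem IsGreedy.le_apply (hw : IsGreedy m w) {j v : Fin n} (hv : v ≤ m j)
    (hfree : ∀ k < j, w k ≠ v) : v ≤ w j := by
  obtain ⟨k, rfl⟩ := w.surjective v
  rcases lt_trichotomy k j with h | rfl | h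
  · exact absurd rfl (hfree k h)
  · exact le_rfl
  · exact (hw.2 j k h hv).le

theorem IsGreedy.lt_of_lt_of_le (hw : IsGreedy m w) {j k : Fin n} (hlt : w j < w k)
    (hle : w k ≤ m j) : k < j := by
  rcases lt_trichotomy k j with h | rfl | h
  · exact h
  · exact (lt_irrefl _ hlt).elim
  · exact ((hw.2 j k h hle).trans hlt).false.elim

theorem IsGreedy.apply_eq_of_forall_le (hu : IsGreedy m u) (hw : IsGreedy m' w) (k : Fin n)
    (hm : ∀ j ≤ k, m j = m' j) : u k = w k := by
  induction k using WellFoundedLT.induction with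
  | _ k ih =>
  have hlt : ∀ j < k, u j = w j := fun j hj => ih j hj fun x hx => hm x (hx.trans hj.le)
  refine le_antisymm (hw.le_apply ((hu.1 k).trans (hm k le_rfl).le) fun j hj h => ?_)
    (hu.le_apply ((hw.1 k).trans (hm k le_rfl).ge) fun j hj h => ?_)
  · exact hj.ne (u.injective ((hlt j hj).trans h))
  · exact hj.ne (w.injective ((hlt j hj).symm.trans h))

theorem IsGreedy.unique (hu : IsGreedy m u) (hw : IsGreedy m w) : u = w :=
  Equiv.ext fun k => hu.apply_eq_of_forall_le hw k fun _ _ => rfl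

theorem IsGreedy.apply_eq (hw : IsGreedy m w) (hbelow : ∀ j < i, m j < m i) : w i = m i :=
  le_antisymm (hw.1 i) <| hw.le_apply le_rfl fun k hk h =>
    (h ▸ hw.1 k).not_gt (hbelow k hk)

theorem IsGreedy.lt_of_lt_apply (hw : IsGreedy m w) (hbelow : ∀ j < i, m j < m i) {k : Fin n}
    (h : m i < w k) : i < k := by
  by_contra! hki
  rcases hki.lt_or_eq with hki | rfl
  · exact ((hw.1 k).trans (hbelow k hki).le).not_gt h
  · exact (hw.1 k).not_gt h

theorem IsGreedy.mul_swap (hw : IsGreedy m w) {p q : Fin n} (hpq : p < q)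
    (hoff : ∀ j ≠ p, m' j = m j) (hqp : w q ≤ m' p) (hpq' : w p ≤ m q)
    (hpair : w p ≤ m' p → w p < w q)
    (hrowp : ∀ k, p < k → k ≠ q → w k ≤ m' p → w k < w q)
    (hcolp : ∀ j < p, w q ≤ m j → w q < w j)
    (hrowq : ∀ k, q < k → w k ≤ m q → w k < w p)
    (hcolq : ∀ j < q, j ≠ p → w p ≤ m j → w p < w j) :
    IsGreedy m' (w * swap p q) := by
  -- the hypotheses are the greedy conditions at the pairs of positions meeting `{p, q}`
  refine ⟨fun x => ?_, fun j k hjk => ?_⟩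
  · rcases eq_or_ne x p with rfl | hxp
    · simpa using hqp
    rcases eq_or_ne x q with rfl | hxq
    · simpa [hoff x hxp] using hpq'
    · simpa [swap_apply_of_ne_of_ne hxp hxq, hoff x hxp] using hw.1 x
  rcases eq_or_ne k p with rfl | hkp
  · have hjq : j ≠ q := (hjk.trans hpq).ne
    simpa [swap_apply_of_ne_of_ne hjk.ne hjq, hoff j hjk.ne] using hcolp j hjk
  rcases eq_or_ne k q with rfl | hkq
  · rcases eq_or_ne j p with rfl | hjp
    · simpa using hpair
    · simpa [swap_apply_of_ne_of_ne hjp hjk.ne, hoff j hjp] using hcolq j hjk hjp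
  simp only [Perm.mul_apply, swap_apply_of_ne_of_ne hkp hkq]
  rcases eq_or_ne j p with rfl | hjp
  · simpa using hrowp k hjk hkq
  rcases eq_or_ne j q with rfl | hjq
  · simpa [hoff j hjp] using hrowq k hjk
  · simpa [swap_apply_of_ne_of_ne hjp hjq, hoff j hjp] using hw.2 j k hjk

end Greedy

section RaiseAt

variable {n : ℕ} {m m₀ m' : Fin n → Fin n} {w w₀ : Perm (Fin n)} {i : Fin n}

theorem IsRaiseAt.apply_lt_apply_of_lt (hr : IsRaiseAt m m' i) (hm : Monotone m) {j : Fin n}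
    (hj : j < i) : m' j < m' i := by
  have := hm hj.le
  have := hr.2
  rw [hr.1 j hj.ne]
  omega

theorem IsRaiseAt.apply_lt_apply_of_gt (hr : IsRaiseAt m m' i) (hm' : Monotone m') {j : Fin n}
    (hj : i < j) : m i < m j := by
  have hij := hm' hj.le
  rw [hr.1 j hj.ne'] at hij
  have := hr.2
  omega

theorem IsGreedy.swap_mul_of_isRaiseAt (hw : IsGreedy m w) (hbelow : ∀ j < i, m j < m i)
    (habove : ∀ j, i < j → m i < m j) (hr : IsRaiseAt m m' i) :
    IsGreedy m' (swap (m i) (m' i) * w) := by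
  have hwi := hw.apply_eq hbelow
  have hmi := hr.2
  obtain ⟨k, hk⟩ := w.surjective (m' i)
  have hik : i < k := hw.lt_of_lt_apply hbelow (by omega)
  rw [swap_mul_eq_mul_swap, show w⁻¹ (m i) = i by simp [← hwi], show w⁻¹ (m' i) = k by simp [← hk]]
  refine hw.mul_swap hik hr.1 hk.le (hwi ▸ (habove k hik).le) (fun _ => by omega)
    (fun x _ hxk hx => lt_of_le_of_ne (hk ▸ hx) (w.injective.ne hxk)) ?_ ?_ ?_
  · intro j hj h
    have := hbelow j hj
    omega
  · intro x hkx hx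
    have := hw.2 k x hkx hx
    have : w x ≠ w i := w.injective.ne (hik.trans hkx).ne'
    omega
  · intro j hjk hji hj
    rcases hji.lt_or_gt with hji | hji
    · have := hbelow j hji
      omega
    · have := habove j hji
      have := hw.2 j k hjk (by omega)
      omega

theorem IsGreedy.apply_eq_apply_of_isRaiseAt (hw₀ : IsGreedy m₀ w₀) (hw : IsGreedy m w)
    (hr : IsRaiseAt m₀ m i) {j : Fin n} (hj : j < i) : w₀ j = w j :=
  hw₀.apply_eq_of_forall_le hw j fun x hx => (hr.1 x (hx.trans_lt hj).ne).symm

theorem IsGreedy.le_apply_of_isRaiseAt (hw₀ : IsGreedy m₀ w₀) (hw : IsGreedy m w)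
    (hr : IsRaiseAt m₀ m i) {k : Fin n} (hik : i < k) (hk : w k ≤ m₀ i) : w k ≤ w₀ i :=
  hw₀.le_apply hk fun _ hj h => (hj.trans hik).ne <|
    w.injective ((hw₀.apply_eq_apply_of_isRaiseAt hw hr hj).symm.trans h)

theorem IsGreedy.lt_inv_apply_of_isRaiseAt (hw₀ : IsGreedy m₀ w₀) (hw : IsGreedy m w)
    (hbelow : ∀ j < i, m j < m i) (hr : IsRaiseAt m₀ m i) : i < w⁻¹ (w₀ i) := by
  have hq : w (w⁻¹ (w₀ i)) = w₀ i := by simp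
  by_contra! hqi
  rcases hqi.lt_or_eq with hqi | hqi
  · exact hqi.ne (w₀.injective ((hw₀.apply_eq_apply_of_isRaiseAt hw hr hqi).trans hq))
  · rw [hqi, hw.apply_eq hbelow] at hq
    have := hw₀.1 i
    have := hr.2
    omega

theorem IsGreedy.apply_lt_apply_of_isRaiseAt (hw₀ : IsGreedy m₀ w₀) (hw : IsGreedy m w)
    (hbelow : ∀ j < i, m j < m i) (habove : ∀ j, i < j → m i ≤ m j) (hr : IsRaiseAt m₀ m i) :
    ∀ k, i < k → k < w⁻¹ (w₀ i) → w i < w k := by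
  intro k hik hkq
  have hq : w (w⁻¹ (w₀ i)) = w₀ i := by simp
  have hwi := hw.apply_eq hbelow
  have hki : w k ≠ w i := w.injective.ne hik.ne'
  have hmi := hr.2
  by_contra! hk
  have hk0 := hw₀.le_apply_of_isRaiseAt hw hr hik (by omega)
  have hqk := hw.2 k _ hkq (by have := hw₀.1 i; have := habove k hik; omega)
  omega

theorem IsGreedy.eq_mul_swap_of_isRaiseAt (hw₀ : IsGreedy m₀ w₀) (hw : IsGreedy m w)
    (hbelow : ∀ j < i, m j < m i) (habove : ∀ j, i < j → m i ≤ m j) (hr : IsRaiseAt m₀ m i) :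
    w₀ = w * swap i (w⁻¹ (w₀ i)) := by
  have hbtw := hw₀.apply_lt_apply_of_isRaiseAt hw hbelow habove hr
  have hiq := hw₀.lt_inv_apply_of_isRaiseAt hw hbelow hr
  obtain ⟨q, hq⟩ := w.surjective (w₀ i)
  rw [show w⁻¹ (w₀ i) = q by simp [← hq]] at hiq hbtw ⊢
  have hwi := hw.apply_eq hbelow
  have hmi := hr.2
  have h0i := hw₀.1 i
  refine ((hw.mul_swap hiq (fun j hj => (hr.1 j hj).symm) (hq ▸ h0i) (hwi ▸ habove _ hiq)
    (fun _ => by omega) ?_ ?_ ?_ ?_).unique hw₀).symm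
  · intro k hik hkq hk
    exact hq ▸ lt_of_le_of_ne (hw₀.le_apply_of_isRaiseAt hw hr hik hk) (hq ▸ w.injective.ne hkq)
  · intro j hj h
    rw [hq, hr.1 j hj.ne] at h
    rw [hq, ← hw₀.apply_eq_apply_of_isRaiseAt hw hr hj]
    exact hw₀.2 j i hj h
  · intro k hqk hk
    have := hw.2 _ k hqk hk
    omega
  · intro j hjq hji hj
    rcases hji.lt_or_gt with hji | hji
    · have := hbelow j hji
      omega
    · exact hbtw j hji hjq

end RaiseAt

/-- The modular-law configuration: for Hessenberg functions `m0, m1, m2`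
differing only at `i` with `m0(i) = m1(i)-1 = m2(i)-2` and
`m1(m1(i)+1) = m1(m1(i))`, setting `s = (l,l+1)` with `l = m1(i)`, one has
`w_{m1}s < w_{m1} < s w_{m1} = w_{m2}`, `w_{m0} ⋖ w_{m1}` and `s w_{m0} < w_{m0}`. -/
theorem stmt16 {n : ℕ} (m0 m1 m2 : Fin n → Fin n)
    (h0 : Hess m0) (h1 : Hess m1) (h2 : Hess m2) (i : Fin n)
    (hne : ∀ j, j ≠ i → m0 j = m1 j ∧ m2 j = m1 j)
    (hi0 : (m0 i : ℕ) + 1 = (m1 i : ℕ)) (hi2 : (m1 i : ℕ) + 1 = (m2 i : ℕ))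
    (hl : (m1 i : ℕ) + 1 < n)
    (hm1 : m1 ⟨(m1 i : ℕ) + 1, hl⟩ = m1 (m1 i))
    (s : Equiv.Perm (Fin n)) (hs : s = Equiv.swap (m1 i) ⟨(m1 i : ℕ) + 1, hl⟩)
    (w0 w1 w2 : Equiv.Perm (Fin n))
    (hw0 : IsLexMax m0 w0) (hw1 : IsLexMax m1 w1) (hw2 : IsLexMax m2 w2) :
    BruhatLT (w1 * s) w1 ∧ BruhatLT w1 (s * w1) ∧ s * w1 = w2 ∧
    BruhatLE w0 w1 ∧ len w0 + 1 = len w1 ∧ BruhatLT (s * w0) w0 := by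
  have g0 := hw0.isGreedy h0.1
  have g1 := hw1.isGreedy h1.1
  have g2 := hw2.isGreedy h2.1
  have r01 : IsRaiseAt m0 m1 i := ⟨fun j hj => (hne j hj).1.symm, hi0.symm⟩
  have r12 : IsRaiseAt m1 m2 i := ⟨fun j hj => (hne j hj).2, hi2.symm⟩
  have hbelow : ∀ j < i, m1 j < m1 i := fun _ => r01.apply_lt_apply_of_lt h0.1
  have habove : ∀ j, i < j → m1 i < m1 j := fun _ => r12.apply_lt_apply_of_gt h2.1
  have habove' : ∀ j, i < j → m1 i ≤ m1 j := fun j hj => (habove j hj).le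
  rw [show (⟨m1 i + 1, hl⟩ : Fin n) = m2 i from Fin.ext hi2] at hm1 hs
  subst hs
  have hlL : m1 i < m2 i := by omega
  have hw1i := g1.apply_eq hbelow
  have hw0 := g0.eq_mul_swap_of_isRaiseAt g1 hbelow habove' r01
  have hbtw := g0.apply_lt_apply_of_isRaiseAt g1 hbelow habove' r01
  have hiq := g0.lt_inv_apply_of_isRaiseAt g1 hbelow r01
  set q := w1⁻¹ (w0 i)
  have hw1q : w1 q = w0 i := by simp [q]
  have hqi : w1 q < w1 i := by
    have := g0.1 i
    omega
  obtain ⟨k0, hk0⟩ := w1.surjective (m2 i)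
  have hik0 : i < k0 := g1.lt_of_lt_apply hbelow (by rw [hk0]; omega)
  have hk0q : k0 < q := g1.lt_of_lt_of_le (by omega) (by have := habove q hiq; omega)
  have hw0q : w0 q = m1 i := by rw [hw0, Perm.mul_apply, swap_apply_right, hw1i]
  have hw0k0 : w0 k0 = m2 i := by
    rw [hw0, Perm.mul_apply, swap_apply_of_ne_of_ne hik0.ne' hk0q.ne, hk0]
  refine ⟨bruhatLT_mul_swap hlL (g1.2 _ _ hlL (hm1 ▸ g1.1 _)),
    bruhatLT_self_swap_mul hik0 hlL hw1i hk0,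
    (g1.swap_mul_of_isRaiseAt hbelow habove r12).unique g2, ?_, ?_,
    bruhatLT_swap_mul hk0q hlL hw0k0 hw0q⟩
  · rw [hw0]
    exact bruhatLE_mul_swap hiq hqi
  · rw [hw0]
    exact len_mul_swap_add_one hiq hqi fun k hik hkq => Or.inr (hbtw k hik hkq)
end
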